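/- For every even nonnegative integer ℓ and every real p, ∫_{−1}^{1} P_ℓ(y) · cosh(p·arcsin y)/√(1−y²) dy = (2 sinh(πp/2)/p) · ∏_{k=1}^{ℓ/2} (p² + (2k−1)²)/(p² + 4k²), where at p = 0 the factor 2 sinh(πp/2)/p is interpreted as its limit π. -/

import Mathlib

/-!
Substituting `y = sin θ` turns the integral into `J_n(p) = ∫_{-π/2}^{π/2} P_n(sin θ) cosh(pθ) dθ`.
Integrating by parts against `cosh(pθ)` and `sinh(pθ)`, with boundary terms killed by
`cos(±π/2) = 0`, and using the Legendre equation `((1 - y²) P_n')' = -n(n+1) P_n`, Bonnet's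
recurrence and `(2n+3)(1 - y²) P_{n+1}' = (n+1)(n+2)(P_n - P_{n+2})`, gives
`(p² + (n+2)²) J_{n+2} = (p² + (n+1)²) J_n`. Iterating from `J_0(p) = 2 sinh(πp/2)/p` gives the
product.
-/

open Real Finset

/-- Legendre polynomial of degree `l`, via Rodrigues' formula. -/
noncomputable def legendreP (l : ℕ) (y : ℝ) : ℝ :=
  (1 / (2 ^ l * (Nat.factorial l : ℝ))) *
    iteratedDeriv l (fun t : ℝ => (t ^ 2 - 1) ^ l) y

open Polynomial MeasureTheory

namespace Polynomial

noncomputable def rodrigues (n : ℕ) : ℝ[X] := derivative^[n] ((X ^ 2 - 1) ^ n)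

noncomputable def legendre (n : ℕ) : ℝ[X] := C (2 ^ n * n.factorial : ℝ)⁻¹ * rodrigues n

theorem derivative_X_sq_sub_one_pow_succ (n : ℕ) :
    derivative ((X ^ 2 - 1 : ℝ[X]) ^ (n + 1)) = C (2 * (n + 1) : ℝ) * ((X ^ 2 - 1) ^ n * X) := by
  rw [derivative_pow_succ, derivative_sub, derivative_X_sq, derivative_one, sub_zero, C_mul]
  ring

theorem derivative_rodrigues (n : ℕ) :
    derivative (rodrigues n) = derivative^[n + 1] ((X ^ 2 - 1) ^ n) :=
  (Function.iterate_succ_apply' derivative n _).symm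

theorem derivative_rodrigues_succ (n : ℕ) :
    derivative (rodrigues (n + 1)) =
      2 * (n + 1 : ℝ[X]) * (derivative (rodrigues n) * X + (n + 1 : ℝ[X]) * rodrigues n) := by
  rw [derivative_rodrigues, Function.iterate_succ_apply, derivative_X_sq_sub_one_pow_succ,
    iterate_derivative_C_mul, iterate_derivative_mul_X, nsmul_eq_mul, Nat.add_sub_cancel,
    derivative_rodrigues, rodrigues]
  simp only [map_mul, map_add, map_natCast, map_one, map_ofNat]
  push_cast
  rfl

theorem rodrigues_succ (n : ℕ) :
    rodrigues (n + 1) =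
      2 * ((X ^ 2 - 1) * derivative (rodrigues n)) + 2 * (n + 1 : ℝ[X]) * (X * rodrigues n) := by
  -- Two Leibniz expansions of `rodrigues (n + 1)` that share the term
  -- `derivative^[n - 1] ((X ^ 2 - 1) ^ n)`, which is then eliminated.
  have h₁ : rodrigues (n + 1) = C (2 * (n + 1) : ℝ) *
      (rodrigues n * X + (n : ℝ[X]) * derivative^[n - 1] ((X ^ 2 - 1) ^ n)) := by
    rw [rodrigues, Function.iterate_succ_apply, derivative_X_sq_sub_one_pow_succ,
      iterate_derivative_C_mul, iterate_derivative_mul_X, nsmul_eq_mul, rodrigues]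
  have h₂ : rodrigues (n + 1) = (derivative (rodrigues n) * X + (n + 1 : ℝ[X]) * rodrigues n) * X
      + (n + 1 : ℝ[X]) * (rodrigues n * X + (n : ℝ[X]) * derivative^[n - 1] ((X ^ 2 - 1) ^ n))
      - derivative (rodrigues n) := by
    have h : (X ^ 2 - 1 : ℝ[X]) ^ (n + 1) = (X ^ 2 - 1) ^ n * X * X - (X ^ 2 - 1) ^ n := by ring
    rw [rodrigues, h, iterate_derivative_sub, iterate_derivative_mul_X, iterate_derivative_mul_X,
      iterate_derivative_mul_X, derivative_rodrigues, rodrigues]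
    simp only [nsmul_eq_mul, Nat.add_sub_cancel]
    push_cast
    ring
  rw [C_mul] at h₁
  simp only [map_add, map_natCast, map_one, map_ofNat] at h₁
  linear_combination 2 * h₂ - h₁

theorem C_legendre_coeff_eq (n : ℕ) : C (2 ^ n * n.factorial : ℝ)⁻¹ =
    2 * (n + 1 : ℝ[X]) * C (2 ^ (n + 1) * (n + 1).factorial : ℝ)⁻¹ := by
  have h : (2 ^ n * n.factorial : ℝ)⁻¹ = 2 * (n + 1) * (2 ^ (n + 1) * (n + 1).factorial : ℝ)⁻¹ := by
    rw [Nat.factorial_succ]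
    push_cast
    field_simp
    ring
  rw [h]
  simp only [map_mul, map_add, map_natCast, map_one, map_ofNat]

theorem derivative_legendre_succ (n : ℕ) :
    derivative (legendre (n + 1)) = X * derivative (legendre n) + (n + 1 : ℝ[X]) * legendre n := by
  rw [legendre, legendre, derivative_C_mul, derivative_C_mul, derivative_rodrigues_succ,
    C_legendre_coeff_eq n]
  ring

theorem X_sq_sub_one_mul_derivative_legendre (n : ℕ) :
    (X ^ 2 - 1) * derivative (legendre n) =
      (n + 1 : ℝ[X]) * (legendre (n + 1) - X * legendre n) := by
  rw [legendre, legendre, derivative_C_mul, rodrigues_succ, C_legendre_coeff_eq n]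
  ring

theorem derivative_one_sub_X_sq_mul_derivative_legendre (n : ℕ) :
    derivative ((1 - X ^ 2) * derivative (legendre n)) = -((n : ℝ) * (n + 1)) • legendre n := by
  have h : (1 - X ^ 2) * derivative (legendre n) =
      -((n + 1 : ℝ[X]) * (legendre (n + 1) - X * legendre n)) := by
    rw [← X_sq_sub_one_mul_derivative_legendre]
    ring
  rw [h, derivative_neg, derivative_mul, derivative_sub, derivative_mul, derivative_legendre_succ,
    smul_eq_C_mul]
  simp only [derivative_natCast, derivative_one, derivative_X, map_neg, map_mul,
    map_add, map_natCast, map_one]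
  ring

theorem legendre_bonnet (n : ℕ) :
    (2 * n + 3 : ℝ) • (X * legendre (n + 1)) =
      (n + 2 : ℝ) • legendre (n + 2) + (n + 1 : ℝ) • legendre n := by
  simp only [smul_eq_C_mul, map_add, map_mul, map_natCast, map_ofNat, map_one]
  linear_combination (norm := (push_cast; ring)) X_sq_sub_one_mul_derivative_legendre (n + 1) -
    (X ^ 2 - 1) * derivative_legendre_succ n - X * X_sq_sub_one_mul_derivative_legendre n

theorem one_sub_X_sq_mul_derivative_legendre_succ (n : ℕ) :
    (2 * n + 3 : ℝ) • ((1 - X ^ 2) * derivative (legendre (n + 1))) =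
      ((n + 1) * (n + 2) : ℝ) • (legendre n - legendre (n + 2)) := by
  simp only [smul_eq_C_mul, map_add, map_mul, map_natCast, map_ofNat, map_one]
  linear_combination (norm := (push_cast; ring))
    -(n + 1 : ℝ[X]) * X_sq_sub_one_mul_derivative_legendre (n + 1) -
    (n + 2 : ℝ[X]) * (X ^ 2 - 1) * derivative_legendre_succ n -
    (n + 2 : ℝ[X]) * X * X_sq_sub_one_mul_derivative_legendre n

theorem legendre_zero : legendre 0 = 1 := by
  simp [legendre, rodrigues]

theorem iteratedDeriv_eval {𝕜 : Type*} [NontriviallyNormedField 𝕜] (k : ℕ) (q : 𝕜[X]) :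
    iteratedDeriv k (fun t => q.eval t) = fun t => (derivative^[k] q).eval t := by
  induction k generalizing q with
  | zero => simp
  | succ k ih =>
    have h : deriv (fun t => q.eval t) = fun t => (derivative q).eval t := by
      ext; exact q.deriv
    rw [iteratedDeriv_succ', h, ih, Function.iterate_succ_apply]

theorem legendreP_eq_eval (n : ℕ) (y : ℝ) : legendreP n y = (legendre n).eval y := by
  have hU : (fun t : ℝ => (t ^ 2 - 1) ^ n) = fun t => ((X ^ 2 - 1 : ℝ[X]) ^ n).eval t := by
    simp
  rw [legendreP, hU, iteratedDeriv_eval, legendre, rodrigues, eval_mul, eval_C, one_div]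

end Polynomial

theorem integral_div_sqrt_one_sub_sq (f : ℝ → ℝ) :
    ∫ y in (-1 : ℝ)..1, f y / √(1 - y ^ 2) = ∫ θ in -(π / 2)..π / 2, f (sin θ) := by
  have himage : sin '' Set.Ioo (-(π / 2)) (π / 2) = Set.Ioo (-1) 1 := by
    refine (Set.mapsTo_iff_image_subset.1 mapsTo_sin_Ioo).antisymm fun y hy => ?_
    exact ⟨arcsin y, ⟨neg_pi_div_two_lt_arcsin.2 hy.1, arcsin_lt_pi_div_two.2 hy.2⟩,
      sin_arcsin hy.1.le hy.2.le⟩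
  rw [intervalIntegral.integral_of_le (by norm_num), integral_Ioc_eq_integral_Ioo, ← himage,
    integral_image_eq_integral_abs_deriv_smul measurableSet_Ioo
      (fun θ _ => (hasDerivAt_sin θ).hasDerivWithinAt) (injOn_sin.mono Set.Ioo_subset_Icc_self),
    intervalIntegral.integral_of_le (by linarith [pi_pos]), integral_Ioc_eq_integral_Ioo]
  refine setIntegral_congr_fun measurableSet_Ioo fun θ hθ => ?_
  have hcos : 0 < cos θ := cos_pos_of_mem_Ioo hθ
  rw [← cos_sq', sqrt_sq hcos.le, abs_of_pos hcos, smul_eq_mul, mul_div_cancel₀ _ hcos.ne']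

theorem integral_deriv_mul_eq_neg_of_eq_zero {a b : ℝ} {f f' u u' : ℝ → ℝ}
    (hf : ∀ x, HasDerivAt f (f' x) x) (hu : ∀ x, HasDerivAt u (u' x) x)
    (hf' : Continuous f') (hu' : Continuous u') (ha : f a = 0) (hb : f b = 0) :
    ∫ x in a..b, f' x * u x = -∫ x in a..b, f x * u' x := by
  have h := intervalIntegral.integral_mul_deriv_eq_deriv_mul (fun x _ => hu x) (fun x _ => hf x)
    (hu'.intervalIntegrable a b) (hf'.intervalIntegrable a b)
  simp only [ha, hb, mul_zero, sub_zero, zero_sub] at h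
  simpa only [mul_comm] using h

noncomputable def sinMoment (g : ℝ → ℝ) (hg : Continuous g) : ℝ[X] →ₗ[ℝ] ℝ where
  toFun q := ∫ θ in -(π / 2)..π / 2, q.eval (sin θ) * g θ
  map_add' q r := by
    simp only [eval_add, add_mul]
    exact intervalIntegral.integral_add (Continuous.intervalIntegrable (by fun_prop) _ _)
      (Continuous.intervalIntegrable (by fun_prop) _ _)
  map_smul' c q := by
    simp only [eval_smul, smul_eq_mul, mul_assoc, intervalIntegral.integral_const_mul,
      RingHom.id_apply]

noncomputable def coshMoment (p : ℝ) : ℝ[X] →ₗ[ℝ] ℝ :=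
  sinMoment (fun θ => cosh (p * θ)) (by fun_prop)

noncomputable def sinhMoment (p : ℝ) : ℝ[X] →ₗ[ℝ] ℝ :=
  sinMoment (fun θ => cos θ * sinh (p * θ)) (by fun_prop)

theorem coshMoment_apply (p : ℝ) (q : ℝ[X]) :
    coshMoment p q = ∫ θ in -(π / 2)..π / 2, q.eval (sin θ) * cosh (p * θ) :=
  rfl

theorem sinhMoment_apply (p : ℝ) (q : ℝ[X]) :
    sinhMoment p q = ∫ θ in -(π / 2)..π / 2, q.eval (sin θ) * (cos θ * sinh (p * θ)) :=
  rfl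

theorem hasDerivAt_cosh_const_mul (p θ : ℝ) :
    HasDerivAt (fun t => cosh (p * t)) (p * sinh (p * θ)) θ := by
  simpa [mul_comm] using ((hasDerivAt_id θ).const_mul p).cosh

theorem hasDerivAt_sinh_const_mul (p θ : ℝ) :
    HasDerivAt (fun t => sinh (p * t)) (p * cosh (p * θ)) θ := by
  simpa [mul_comm] using ((hasDerivAt_id θ).const_mul p).sinh

theorem hasDerivAt_eval_sin (q : ℝ[X]) (θ : ℝ) :
    HasDerivAt (fun t => q.eval (sin t)) ((derivative q).eval (sin θ) * cos θ) θ :=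
  (q.hasDerivAt (sin θ)).comp θ (hasDerivAt_sin θ)

theorem coshMoment_one_sub_X_sq_mul_derivative_sub (p : ℝ) (q : ℝ[X]) :
    coshMoment p ((1 - X ^ 2) * derivative q - X * q) = -(p * sinhMoment p q) := by
  have hf (θ : ℝ) : HasDerivAt (fun t => cos t * q.eval (sin t))
      (((1 - X ^ 2) * derivative q - X * q).eval (sin θ)) θ := by
    refine ((hasDerivAt_cos θ).mul (hasDerivAt_eval_sin q θ)).congr_deriv ?_
    simp only [eval_sub, eval_mul, eval_one, eval_pow, eval_X]
    linear_combination (derivative q).eval (sin θ) * sin_sq_add_cos_sq θ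
  have h := integral_deriv_mul_eq_neg_of_eq_zero (a := -(π / 2)) (b := π / 2) hf
    (hasDerivAt_cosh_const_mul p) (by fun_prop) (by fun_prop) (by simp) (by simp)
  rw [coshMoment_apply, h, sinhMoment_apply, ← intervalIntegral.integral_const_mul]
  congr 1
  refine intervalIntegral.integral_congr fun θ _ => ?_
  ring

theorem sinhMoment_derivative (p : ℝ) {r : ℝ[X]} (h₁ : r.eval 1 = 0) (h₂ : r.eval (-1) = 0) :
    sinhMoment p (derivative r) = -(p * coshMoment p r) := by
  have h := integral_deriv_mul_eq_neg_of_eq_zero (a := -(π / 2)) (b := π / 2)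
    (hasDerivAt_eval_sin r) (hasDerivAt_sinh_const_mul p) (by fun_prop) (by fun_prop)
    (by simpa using h₂) (by simpa using h₁)
  rw [coshMoment_apply, sinhMoment_apply, ← intervalIntegral.integral_const_mul]
  simp only [← mul_assoc, h]
  congr 1
  refine intervalIntegral.integral_congr fun θ _ => ?_
  ring

theorem coshMoment_legendre_add_two (p : ℝ) (n : ℕ) :
    (p ^ 2 + (n + 2) ^ 2) * coshMoment p (legendre (n + 2)) =
      (p ^ 2 + (n + 1) ^ 2) * coshMoment p (legendre n) := by
  set q := legendre (n + 1)
  have hA := coshMoment_one_sub_X_sq_mul_derivative_sub p q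
  have hB := sinhMoment_derivative p (r := (1 - X ^ 2) * derivative q) (by simp) (by simp)
  have hBonnet := congrArg (coshMoment p) (legendre_bonnet n)
  have hDeriv := congrArg (coshMoment p) (one_sub_X_sq_mul_derivative_legendre_succ n)
  rw [derivative_one_sub_X_sq_mul_derivative_legendre, map_smul, smul_eq_mul] at hB
  rw [map_sub] at hA
  simp only [map_add, map_sub, map_smul, smul_eq_mul] at hBonnet hDeriv
  push_cast at hB
  -- With `a = (n + 1) (n + 2)`, `W = coshMoment p ((1 - X²) q')` and `D = coshMoment p (X q)`,
  -- `hA` and `hB` give `(a + p²) W = a D`, while `hDeriv` and `hBonnet` express `W` and `D`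
  -- through the moments of `legendre n` and `legendre (n + 2)`.
  have ha : ((n : ℝ) + 1) * (n + 2) ≠ 0 := by positivity
  refine mul_left_cancel₀ ha ?_
  linear_combination ((n + 1) * (n + 2) + p ^ 2) * hDeriv - (n + 1) * (n + 2) * hBonnet -
    (2 * n + 3) * (n + 1) * (n + 2) * hA - (2 * n + 3) * p * hB

theorem coshMoment_one (p : ℝ) :
    coshMoment p 1 = if p = 0 then π else 2 * sinh (π * p / 2) / p := by
  rw [coshMoment_apply]
  simp only [eval_one, one_mul]
  split_ifs with hp
  · simp [hp]
  · have hderiv (θ : ℝ) : HasDerivAt (fun t => sinh (p * t) / p) (cosh (p * θ)) θ := by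
      simpa [mul_div_cancel_left₀ _ hp] using (hasDerivAt_sinh_const_mul p θ).div_const p
    rw [intervalIntegral.integral_eq_sub_of_hasDerivAt (fun θ _ => hderiv θ)
      (Continuous.intervalIntegrable (by fun_prop) _ _), mul_neg, sinh_neg, mul_div_assoc',
      mul_comm p]
    ring

theorem coshMoment_legendre_two_mul (p : ℝ) (k : ℕ) :
    coshMoment p (legendre (2 * k)) = coshMoment p 1 *
      ∏ j ∈ range k, (p ^ 2 + (2 * (j : ℝ) + 1) ^ 2) / (p ^ 2 + 4 * ((j : ℝ) + 1) ^ 2) := by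
  induction k with
  | zero => simp [legendre_zero]
  | succ k ih =>
    have h := coshMoment_legendre_add_two p (2 * k)
    have hpos : p ^ 2 + 4 * ((k : ℝ) + 1) ^ 2 ≠ 0 := by positivity
    rw [prod_range_succ, ← mul_assoc, ← ih, mul_add_one]
    push_cast at h
    field_simp
    linear_combination h

theorem integral_legendreP_mul_cosh_div_sqrt (n : ℕ) (p : ℝ) :
    ∫ y in (-1 : ℝ)..1, legendreP n y * cosh (p * arcsin y) / √(1 - y ^ 2) =
      coshMoment p (legendre n) := by
  rw [integral_div_sqrt_one_sub_sq (fun y => legendreP n y * cosh (p * arcsin y)),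
    coshMoment_apply]
  refine intervalIntegral.integral_congr fun θ hθ => ?_
  rw [Set.uIcc_of_le (by linarith [pi_pos])] at hθ
  simp only [legendreP_eq_eval, arcsin_sin hθ.1 hθ.2]

/-- For `ℓ` even,
`∫_{-1}^1 P_ℓ(y) cosh(p arcsin y)/√(1-y²) dy
  = (2 sinh(πp/2)/p) ∏_{k=1}^{ℓ/2} (p²+(2k-1)²)/(p²+4k²)`,
where at `p = 0` the prefactor is interpreted as its limit `π`. -/
theorem legendre_cosh_arcsin_integral (l : ℕ) (hl : Even l) (p : ℝ) :
    (∫ y in (-1 : ℝ)..1, legendreP l y * Real.cosh (p * Real.arcsin y) / Real.sqrt (1 - y ^ 2)) =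
      (if p = 0 then π else 2 * Real.sinh (π * p / 2) / p) *
        ∏ k ∈ Finset.range (l / 2),
          (p ^ 2 + (2 * (k : ℝ) + 1) ^ 2) / (p ^ 2 + 4 * ((k : ℝ) + 1) ^ 2) := by
  obtain ⟨k, rfl⟩ := hl
  rw [integral_legendreP_mul_cosh_div_sqrt, ← two_mul, coshMoment_legendre_two_mul, coshMoment_one,
    Nat.mul_div_cancel_left k two_pos]
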